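/- (Fidelity to a product with the marginal) For any density operator ω_{QS'} on H_Q ⊗ H_{S'} with marginals ω_Q and ω_{S'}, and any pure state |ψ⟩⟨ψ| on H_Q, Fid(|ψ⟩⟨ψ| ⊗ ω_{S'}, ω_{QS'}) ≥ Fid²(|ψ⟩⟨ψ|, ω_Q) = ⟨ψ| ω_Q |ψ⟩. -/

import Mathlib

open Matrix Kronecker
open scoped ComplexOrder

/-- Time evolution unitary `e^{-iHt}`. -/
noncomputable def timeEvo {ι : Type} [Fintype ι] [DecidableEq ι]
    (H : Matrix ι ι ℂ) (t : ℝ) : Matrix ι ι ℂ :=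
  NormedSpace.exp ((-(Complex.I * (t : ℂ))) • H)

/-- Conjugation `U M U†`. -/
noncomputable def uconj {ι : Type} [Fintype ι] (U M : Matrix ι ι ℂ) : Matrix ι ι ℂ :=
  U * M * Uᴴ

/-- A density operator: positive semidefinite with unit trace. -/
noncomputable def IsState {ι : Type} [Fintype ι] (ρ : Matrix ι ι ℂ) : Prop :=
  ρ.PosSemidef ∧ ρ.trace = 1

/-- Choi matrix of a linear map. -/
noncomputable def choi {ι κ : Type} [Fintype ι] [DecidableEq ι] [Fintype κ]
    (E : Matrix ι ι ℂ →ₗ[ℂ] Matrix κ κ ℂ) : Matrix (ι × κ) (ι × κ) ℂ :=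
  fun p q => E (Matrix.single p.1 q.1 1) p.2 q.2

/-- A quantum channel: completely positive (positive semidefinite Choi matrix)
and trace preserving. -/
noncomputable def IsCPTP {ι κ : Type} [Fintype ι] [DecidableEq ι] [Fintype κ]
    (E : Matrix ι ι ℂ →ₗ[ℂ] Matrix κ κ ℂ) : Prop :=
  (choi E).PosSemidef ∧ ∀ M : Matrix ι ι ℂ, (E M).trace = M.trace

/-- Partial trace over the second (right) tensor factor. -/
noncomputable def ptraceRight {ι κ : Type} [Fintype ι] [Fintype κ]
    (M : Matrix (ι × κ) (ι × κ) ℂ) : Matrix ι ι ℂ :=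
  fun i j => ∑ k, M (i, k) (j, k)

/-- Partial trace over the first (left) tensor factor. -/
noncomputable def ptraceLeft {ι κ : Type} [Fintype ι] [Fintype κ]
    (M : Matrix (ι × κ) (ι × κ) ℂ) : Matrix κ κ ℂ :=
  fun i j => ∑ k, M (k, i) (k, j)

/-- Positive semidefinite square root, extended by `0` to non-PSD matrices. -/
noncomputable def msqrt {ι : Type} [Fintype ι] [DecidableEq ι]
    (M : Matrix ι ι ℂ) : Matrix ι ι ℂ :=
  @dite _ M.PosSemidef (Classical.propDecidable _) (fun h => (h.1.eigenvectorUnitary : Matrix ι ι ℂ) *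
    Matrix.diagonal ((↑) ∘ (√·) ∘ h.1.eigenvalues) * (star h.1.eigenvectorUnitary : Matrix ι ι ℂ)) (fun _ => 0)

/-- Trace norm `‖M‖₁ = Tr √(M†M)`. -/
noncomputable def traceNorm {ι : Type} [Fintype ι] [DecidableEq ι]
    (M : Matrix ι ι ℂ) : ℝ :=
  (msqrt (Mᴴ * M)).trace.re

/-- Uhlmann fidelity `Fid(σ,τ) = ‖√σ√τ‖₁`. -/
noncomputable def Fid {ι : Type} [Fintype ι] [DecidableEq ι]
    (σ τ : Matrix ι ι ℂ) : ℝ :=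
  traceNorm (msqrt σ * msqrt τ)

/-- Rank-one projector `|v⟩⟨v|` of a vector. -/
noncomputable def proj {ι : Type} (v : ι → ℂ) : Matrix ι ι ℂ :=
  Matrix.vecMulVec v (star v)

/-- The asymmetry monotone `f_t(ρ) = 1 - Fid(ρ, e^{-iHt} ρ e^{iHt})`. -/
noncomputable def ft {ι : Type} [Fintype ι] [DecidableEq ι]
    (H : Matrix ι ι ℂ) (t : ℝ) (ρ : Matrix ι ι ℂ) : ℝ :=
  1 - Fid ρ (uconj (timeEvo H t) ρ)


/-! ### Auxiliary lemmas -/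

set_option linter.unusedSectionVars false

section AuxSqrt
variable {ι : Type} [Fintype ι] [DecidableEq ι]

open scoped MatrixOrder in
lemma msqrt_of_psd {M : Matrix ι ι ℂ} (hM : M.PosSemidef) : msqrt M = CFC.sqrt M := by
  rw [msqrt, dif_pos hM, CFC.sqrt_eq_real_sqrt M (nonneg_iff_posSemidef.mpr hM), cfcₙ_eq_cfc (hf0 := Real.sqrt_zero),
    hM.1.cfc_eq]
  simp only [IsHermitian.cfc, Unitary.conjStarAlgAut_apply]
  rfl

open scoped MatrixOrder in
lemma msqrt_posSemidef {M : Matrix ι ι ℂ} (hM : M.PosSemidef) : (msqrt M).PosSemidef := by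
  rw [msqrt_of_psd hM]; exact nonneg_iff_posSemidef.mp (CFC.sqrt_nonneg M)

open scoped MatrixOrder in
lemma msqrt_mul_self {M : Matrix ι ι ℂ} (hM : M.PosSemidef) : msqrt M * msqrt M = M := by
  rw [msqrt_of_psd hM]; exact CFC.sqrt_mul_sqrt_self M (nonneg_iff_posSemidef.mpr hM)

open scoped MatrixOrder in
lemma msqrt_eq_of_sq {M B : Matrix ι ι ℂ} (hM : M.PosSemidef) (hB : B.PosSemidef)
    (h : B * B = M) : msqrt M = B := by
  rw [msqrt_of_psd hM]
  exact CFC.sqrt_unique h (nonneg_iff_posSemidef.mpr hB)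

lemma msqrt_herm {M : Matrix ι ι ℂ} (hM : M.PosSemidef) : (msqrt M)ᴴ = msqrt M :=
  (msqrt_posSemidef hM).1

lemma kron_conjTranspose {κ : Type} [Fintype κ] (A : Matrix ι ι ℂ) (B : Matrix κ κ ℂ) :
    (A ⊗ₖ B)ᴴ = Aᴴ ⊗ₖ Bᴴ := by
  ext ⟨i, s⟩ ⟨j, t⟩
  simp [conjTranspose_apply, kroneckerMap_apply]

lemma psd_kron {κ : Type} [Fintype κ] [DecidableEq κ] {A : Matrix ι ι ℂ} {B : Matrix κ κ ℂ}
    (hA : A.PosSemidef) (hB : B.PosSemidef) : (A ⊗ₖ B).PosSemidef := by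
  exact hA.kronecker hB

lemma proj_posSemidef (v : ι → ℂ) : (proj v).PosSemidef := by
  refine posSemidef_iff_dotProduct_mulVec.mpr ⟨?_, ?_⟩
  · ext i j
    simp [proj, conjTranspose_apply, vecMulVec_apply, mul_comm]
  · intro x
    have h1 : (proj v) *ᵥ x = (star v ⬝ᵥ x) • v := by
      ext i
      simp [proj, mulVec, dotProduct, vecMulVec_apply, Finset.mul_sum, mul_comm, mul_left_comm]
    rw [h1, dotProduct_smul]
    have h2 : star x ⬝ᵥ v = star (star v ⬝ᵥ x) := by
      simp [dotProduct, star_sum, mul_comm]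
    rw [smul_eq_mul, h2, mul_comm]
    exact star_mul_self_nonneg _

lemma proj_mul_proj (v : ι → ℂ) : proj v * proj v = (star v ⬝ᵥ v) • proj v := by
  ext i j
  simp only [proj, Matrix.mul_apply, vecMulVec_apply, Matrix.smul_apply, smul_eq_mul, dotProduct]
  rw [Finset.sum_mul]
  refine Finset.sum_congr rfl fun k _ => by ring

lemma trace_proj (v : ι → ℂ) : (proj v).trace = star v ⬝ᵥ v := by
  simp [proj, trace, Matrix.diag, vecMulVec_apply, dotProduct, mul_comm]

lemma psd_sum {κ : Type} (s : Finset κ) (f : κ → Matrix ι ι ℂ)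
    (hf : ∀ k ∈ s, (f k).PosSemidef) : (∑ k ∈ s, f k).PosSemidef :=
  Finset.sum_induction f _ (fun _ _ ha hb => ha.add hb) Matrix.PosSemidef.zero hf

lemma trace_re_nonneg_of_psd {M : Matrix ι ι ℂ} (hM : M.PosSemidef) : 0 ≤ M.trace.re := by
  have h : ∀ i, 0 ≤ (M i i).re := by
    intro i
    have := hM.dotProduct_mulVec_nonneg (Pi.single i 1)
    have h2 : star (Pi.single i 1 : ι → ℂ) ⬝ᵥ M *ᵥ Pi.single i 1 = M i i := by
      simp [dotProduct, mulVec, Pi.single_apply, apply_ite star]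
    rw [h2] at this
    exact (Complex.le_def.mp this).1
  rw [Matrix.trace, Complex.re_sum]
  exact Finset.sum_nonneg fun i _ => h i

/-- Operator monotonicity of the square root (Löwner), in the form needed here. -/
lemma psd_sub_of_sq_psd_sub {X Y : Matrix ι ι ℂ} (hX : X.PosSemidef) (hY : Y.PosSemidef)
    (h : (X * X - Y * Y).PosSemidef) : (X - Y).PosSemidef := by
  have hD : (X - Y).IsHermitian := hX.1.sub hY.1
  refine hD.posSemidef_iff_eigenvalues_nonneg.mpr fun i => ?_
  show 0 ≤ hD.eigenvalues i
  by_contra hneg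
  push_neg at hneg
  set μ : ℝ := hD.eigenvalues i with hμ
  set v : ι → ℂ := ⇑(hD.eigenvectorBasis i) with hv
  have hvnz : v ≠ 0 := by
    intro h0
    have h1 : ‖hD.eigenvectorBasis i‖ = 1 := hD.eigenvectorBasis.orthonormal.1 i
    have : (hD.eigenvectorBasis i : EuclideanSpace ℂ ι) = 0 := by
      ext j; exact congrFun h0 j
    rw [this, norm_zero] at h1
    norm_num at h1
  have hev0 : (X - Y) *ᵥ v = μ • v := hD.mulVec_eigenvectorBasis i
  have hev : (X - Y) *ᵥ v = (μ : ℂ) • v := by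
    rw [hev0]; funext j; simp [Complex.real_smul]
  have hqd : star v ⬝ᵥ ((X * X - Y * Y) *ᵥ v) =
      (μ : ℂ) * (star v ⬝ᵥ (X *ᵥ v) + star v ⬝ᵥ (Y *ᵥ v)) := by
    have hsplit : X * X - Y * Y = X * (X - Y) + (X - Y) * Y := by noncomm_ring
    rw [hsplit, Matrix.add_mulVec, dotProduct_add]
    have h1 : star v ⬝ᵥ (X * (X - Y)) *ᵥ v = (μ : ℂ) * (star v ⬝ᵥ (X *ᵥ v)) := by
      rw [← Matrix.mulVec_mulVec, hev, Matrix.mulVec_smul, dotProduct_smul, smul_eq_mul]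
    have h2 : star v ⬝ᵥ ((X - Y) * Y) *ᵥ v = (μ : ℂ) * (star v ⬝ᵥ (Y *ᵥ v)) := by
      rw [← Matrix.mulVec_mulVec, dotProduct_mulVec]
      have h3 : star v ᵥ* (X - Y) = star ((X - Y) *ᵥ v) := by
        rw [Matrix.star_mulVec, hD.eq]
      rw [h3, hev]
      have h4 : star ((μ : ℂ) • v) = (μ : ℂ) • star v := by
        ext j; simp [Complex.real_smul]
      rw [h4, smul_dotProduct, smul_eq_mul]
    rw [h1, h2, mul_add]
  have hq0 : 0 ≤ (μ : ℂ) * (star v ⬝ᵥ (X *ᵥ v) + star v ⬝ᵥ (Y *ᵥ v)) := by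
    rw [← hqd]; exact h.dotProduct_mulVec_nonneg v
  have hqX : 0 ≤ star v ⬝ᵥ (X *ᵥ v) := hX.dotProduct_mulVec_nonneg v
  have hqY : 0 ≤ star v ⬝ᵥ (Y *ᵥ v) := hY.dotProduct_mulVec_nonneg v
  have hsum : star v ⬝ᵥ (X *ᵥ v) + star v ⬝ᵥ (Y *ᵥ v) = 0 := by
    have hge : 0 ≤ star v ⬝ᵥ (X *ᵥ v) + star v ⬝ᵥ (Y *ᵥ v) := add_nonneg hqX hqY
    set q := star v ⬝ᵥ (X *ᵥ v) + star v ⬝ᵥ (Y *ᵥ v) with hqdef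
    have hre : 0 ≤ q.re := (Complex.le_def.mp hge).1
    have him : q.im = 0 := ((Complex.le_def.mp hge).2).symm
    have h0 : 0 ≤ ((μ : ℂ) * q).re := (Complex.le_def.mp hq0).1
    have h5 : ((μ : ℂ) * q).re = μ * q.re := by
      simp [Complex.mul_re, him]
    rw [h5] at h0
    have : q.re = 0 := le_antisymm (by nlinarith) hre
    exact Complex.ext (by simp [this]) (by simp [him])
  have hXv : X *ᵥ v = 0 := by
    have h6 : star v ⬝ᵥ (X *ᵥ v) = 0 := by
      have h1 : star v ⬝ᵥ (X *ᵥ v) ≤ 0 := by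
        rw [← hsum]; simpa using hqY
      exact le_antisymm h1 hqX
    exact (hX.dotProduct_mulVec_zero_iff v).mp h6
  have hYv : Y *ᵥ v = 0 := by
    have h6 : star v ⬝ᵥ (Y *ᵥ v) = 0 := by
      have h1 : star v ⬝ᵥ (Y *ᵥ v) ≤ 0 := by
        rw [← hsum]; simpa using hqX
      exact le_antisymm h1 hqY
    exact (hY.dotProduct_mulVec_zero_iff v).mp h6
  have hzero : (μ : ℂ) • v = 0 := by
    rw [← hev, Matrix.sub_mulVec, hXv, hYv, sub_zero]
  have hμ0 : (μ : ℂ) ≠ 0 := by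
    simp only [ne_eq, Complex.ofReal_eq_zero]
    exact ne_of_lt hneg
  exact hvnz ((smul_eq_zero.mp hzero).resolve_left hμ0)

lemma trace_re_msqrt_le {A B : Matrix ι ι ℂ} (hA : A.PosSemidef) (hB : B.PosSemidef)
    (h : (B - A).PosSemidef) : (msqrt A).trace.re ≤ (msqrt B).trace.re := by
  have h2 : ((msqrt B) * (msqrt B) - (msqrt A) * (msqrt A)).PosSemidef := by
    rw [msqrt_mul_self hA, msqrt_mul_self hB]; exact h
  have h3 := psd_sub_of_sq_psd_sub (msqrt_posSemidef hB) (msqrt_posSemidef hA) h2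
  have h4 := trace_re_nonneg_of_psd h3
  rw [trace_sub, Complex.sub_re] at h4
  linarith

lemma fid_eq {σ τ : Matrix ι ι ℂ} (hσ : σ.PosSemidef) (hτ : τ.PosSemidef) :
    Fid σ τ = (msqrt (msqrt τ * σ * msqrt τ)).trace.re := by
  rw [Fid, traceNorm]
  congr 3
  rw [conjTranspose_mul, (msqrt_posSemidef hσ).1.eq, (msqrt_posSemidef hτ).1.eq,
    Matrix.mul_assoc, ← Matrix.mul_assoc (msqrt σ), msqrt_mul_self hσ, ← Matrix.mul_assoc]

lemma dotProduct_star_self_re_nonneg (v : ι → ℂ) : 0 ≤ (star v ⬝ᵥ v).re :=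
  (Complex.le_def.mp (dotProduct_star_self_nonneg v)).1

lemma dotProduct_star_self_eq_re (v : ι → ℂ) : star v ⬝ᵥ v = ((star v ⬝ᵥ v).re : ℂ) := by
  have him := (Complex.le_def.mp (dotProduct_star_self_nonneg v)).2
  exact Complex.ext rfl (by simp [← him])

lemma trace_msqrt_proj (v : ι → ℂ) :
    (msqrt (proj v)).trace.re = Real.sqrt ((star v ⬝ᵥ v).re) := by
  set r : ℝ := (star v ⬝ᵥ v).re with hr
  have hrnn : 0 ≤ r := dotProduct_star_self_re_nonneg v
  rcases eq_or_lt_of_le hrnn with h0 | hpos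
  · have hv0 : v = 0 := by
      refine dotProduct_star_self_eq_zero.mp ?_
      rw [dotProduct_star_self_eq_re v, ← hr, ← h0]
      simp
    have hz : proj v = 0 := by
      ext i j; simp [proj, hv0, vecMulVec_apply]
    rw [hz, msqrt_eq_of_sq Matrix.PosSemidef.zero Matrix.PosSemidef.zero (by simp), ← h0]
    simp
  · set c : ℝ := Real.sqrt r with hc
    have hcpos : 0 < c := Real.sqrt_pos.mpr hpos
    set w : ι → ℂ := (↑(Real.sqrt c⁻¹) : ℂ) • v with hw
    have hsw : star w ⬝ᵥ w = (c : ℂ) := by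
      have h1 : star w = (↑(Real.sqrt c⁻¹) : ℂ) • star v := by
        funext j; simp [hw, mul_comm]
      rw [hw, h1, smul_dotProduct, dotProduct_smul, smul_eq_mul, smul_eq_mul, ← mul_assoc,
        ← Complex.ofReal_mul, Real.mul_self_sqrt (by positivity), dotProduct_star_self_eq_re v,
        ← hr, ← Complex.ofReal_mul]
      congr 1
      rw [hc]
      field_simp
      exact (Real.sq_sqrt hrnn).symm
    have hwvv : proj w = (↑(c⁻¹) : ℂ) • proj v := by
      have hstw : star w = (↑(Real.sqrt c⁻¹) : ℂ) • star v := by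
        funext j; simp [hw, mul_comm]
      ext i j
      simp only [proj, vecMulVec_apply, hstw]
      simp only [proj, hw, hstw, vecMulVec_apply, Pi.smul_apply, Matrix.smul_apply, smul_eq_mul]
      rw [show ((↑(Real.sqrt c⁻¹):ℂ) * v i) * ((↑(Real.sqrt c⁻¹):ℂ) * star v j)
          = ((↑(Real.sqrt c⁻¹):ℂ) * (↑(Real.sqrt c⁻¹):ℂ)) * (v i * star v j) by ring,
        ← Complex.ofReal_mul, Real.mul_self_sqrt (by positivity)]
    have hsq : proj w * proj w = proj v := by
      rw [proj_mul_proj, hsw, hwvv, smul_smul, ← Complex.ofReal_mul]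
      rw [mul_inv_cancel₀ (ne_of_gt hcpos)]
      simp
    rw [msqrt_eq_of_sq (proj_posSemidef v) (proj_posSemidef w) hsq, trace_proj, hsw, hc]
    simp

end AuxSqrt

section AuxPtrace
variable {Q S : Type} [Fintype Q] [Fintype S] [DecidableEq Q] [DecidableEq S]

lemma ptraceLeft_eq_sum (ω : Matrix (Q × S) (Q × S) ℂ) :
    ptraceLeft ω = ∑ k : Q, ω.submatrix (fun s => (k, s)) (fun s => (k, s)) := by
  ext s t
  simp [ptraceLeft, Matrix.sum_apply]

lemma ptraceRight_eq_sum (ω : Matrix (Q × S) (Q × S) ℂ) :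
    ptraceRight ω = ∑ k : S, ω.submatrix (fun s => (s, k)) (fun s => (s, k)) := by
  ext s t
  simp [ptraceRight, Matrix.sum_apply]

lemma ptraceLeft_posSemidef {ω : Matrix (Q × S) (Q × S) ℂ} (hω : ω.PosSemidef) :
    (ptraceLeft ω).PosSemidef := by
  rw [ptraceLeft_eq_sum]
  exact psd_sum _ _ fun k _ => hω.submatrix _

lemma ptraceRight_posSemidef {ω : Matrix (Q × S) (Q × S) ℂ} (hω : ω.PosSemidef) :
    (ptraceRight ω).PosSemidef := by
  rw [ptraceRight_eq_sum]
  exact psd_sum _ _ fun k _ => hω.submatrix _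

lemma ptraceLeft_add (A B : Matrix (Q × S) (Q × S) ℂ) :
    ptraceLeft (A + B) = ptraceLeft A + ptraceLeft B := by
  ext s t; simp [ptraceLeft, Finset.sum_add_distrib]

lemma ptraceLeft_sub (A B : Matrix (Q × S) (Q × S) ℂ) :
    ptraceLeft (A - B) = ptraceLeft A - ptraceLeft B := by
  ext s t; simp [ptraceLeft, Finset.sum_sub_distrib]

/-- The compression `⟨ψ| ω |ψ⟩` of a bipartite operator by a vector on the first factor. -/
noncomputable def ptau (ω : Matrix (Q × S) (Q × S) ℂ) (ψ : Q → ℂ) : Matrix S S ℂ :=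
  fun s t => ∑ k, ∑ l, (star (ψ k)) * ω (k, s) (l, t) * ψ l

lemma herm_conj_proj {ι : Type} [Fintype ι] [DecidableEq ι] {M : Matrix ι ι ℂ}
    (hM : Mᴴ = M) (v : ι → ℂ) : M * proj v * M = proj (M *ᵥ v) := by
  ext i j
  have hstar : star ((M *ᵥ v) j) = ∑ l, M l j * star (v l) := by
    simp only [mulVec, dotProduct, star_sum, star_mul']
    exact Finset.sum_congr rfl fun l _ => by
      rw [← conjTranspose_apply, hM, mul_comm]
  simp only [proj, Matrix.mul_apply, vecMulVec_apply, Pi.star_apply]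
  rw [show (M *ᵥ v) i = ∑ k, M i k * v k from rfl, hstar, Finset.sum_mul_sum]
  simp only [Finset.sum_mul]
  rw [Finset.sum_comm]
  refine Finset.sum_congr rfl fun k _ => ?_
  refine Finset.sum_congr rfl fun l _ => by ring

lemma kron_proj_one_mul_mul (ω : Matrix (Q × S) (Q × S) ℂ) (ψ : Q → ℂ) :
    (proj ψ ⊗ₖ (1 : Matrix S S ℂ)) * ω * (proj ψ ⊗ₖ 1) = proj ψ ⊗ₖ ptau ω ψ := by
  ext ⟨i, s⟩ ⟨j, t⟩
  simp only [ptau, Matrix.mul_apply, kroneckerMap_apply, Matrix.one_apply, Fintype.sum_prod_type,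
    proj, vecMulVec_apply, Pi.star_apply, mul_ite, ite_mul, mul_zero, zero_mul, mul_one, one_mul,
    Finset.sum_ite_eq, Finset.sum_ite_eq', Finset.mem_univ, if_true]
  simp only [Finset.sum_mul, Finset.mul_sum]
  rw [Finset.sum_comm]
  refine Finset.sum_congr rfl fun k _ => ?_
  refine Finset.sum_congr rfl fun l _ => by ring

lemma ptraceLeft_kron_mul (ω : Matrix (Q × S) (Q × S) ℂ) (ψ : Q → ℂ) :
    ptraceLeft ((proj ψ ⊗ₖ (1 : Matrix S S ℂ)) * ω) = ptau ω ψ := by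
  ext s t
  simp only [ptau, ptraceLeft, Matrix.mul_apply, kroneckerMap_apply, Matrix.one_apply,
    Fintype.sum_prod_type, proj, vecMulVec_apply, Pi.star_apply, mul_ite, ite_mul, mul_zero,
    zero_mul, mul_one, one_mul, Finset.sum_ite_eq, Finset.sum_ite_eq', Finset.mem_univ, if_true]
  rw [Finset.sum_comm]
  refine Finset.sum_congr rfl fun k _ => ?_
  refine Finset.sum_congr rfl fun l _ => by ring

lemma ptraceLeft_mul_kron (ω : Matrix (Q × S) (Q × S) ℂ) (ψ : Q → ℂ) :
    ptraceLeft (ω * (proj ψ ⊗ₖ (1 : Matrix S S ℂ))) = ptau ω ψ := by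
  ext s t
  simp only [ptau, ptraceLeft, Matrix.mul_apply, kroneckerMap_apply, Matrix.one_apply,
    Fintype.sum_prod_type, proj, vecMulVec_apply, Pi.star_apply, mul_ite, ite_mul, mul_zero,
    zero_mul, mul_one, one_mul, Finset.sum_ite_eq, Finset.sum_ite_eq', Finset.mem_univ, if_true]
  refine Finset.sum_congr rfl fun k _ => ?_
  refine Finset.sum_congr rfl fun l _ => by ring

lemma ptraceLeft_kron (A : Matrix Q Q ℂ) (B : Matrix S S ℂ) :
    ptraceLeft (A ⊗ₖ B) = A.trace • B := by
  ext s t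
  simp only [ptraceLeft, kroneckerMap_apply, Matrix.smul_apply, smul_eq_mul, Matrix.trace,
    Matrix.diag, ← Finset.sum_mul]

lemma trace_mul_kron_one (ω : Matrix (Q × S) (Q × S) ℂ) (ψ : Q → ℂ) :
    (ω * (proj ψ ⊗ₖ (1 : Matrix S S ℂ))).trace = star ψ ⬝ᵥ (ptraceRight ω *ᵥ ψ) := by
  simp only [Matrix.trace, Matrix.diag, Matrix.mul_apply, kroneckerMap_apply, Matrix.one_apply,
    Fintype.sum_prod_type, proj, vecMulVec_apply, Pi.star_apply, mul_ite, ite_mul, mul_zero,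
    zero_mul, mul_one, one_mul, Finset.sum_ite_eq, Finset.sum_ite_eq', Finset.mem_univ, if_true,
    dotProduct, mulVec, ptraceRight, Finset.mul_sum, Finset.sum_mul]
  refine Finset.sum_congr rfl fun i _ => ?_
  rw [Finset.sum_comm]
  exact Finset.sum_congr rfl fun j _ => Finset.sum_congr rfl fun u _ => by ring

lemma sub_kron (A B : Matrix Q Q ℂ) (C : Matrix S S ℂ) :
    (A - B) ⊗ₖ C = A ⊗ₖ C - B ⊗ₖ C := by
  ext ⟨i, s⟩ ⟨j, t⟩
  simp [kroneckerMap_apply, sub_mul]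

lemma kron_sub (A : Matrix Q Q ℂ) (B C : Matrix S S ℂ) :
    A ⊗ₖ (B - C) = A ⊗ₖ B - A ⊗ₖ C := by
  ext ⟨i, s⟩ ⟨j, t⟩
  simp [kroneckerMap_apply, mul_sub]

end AuxPtrace

/-- Fidelity to a product with the marginal:
`Fid(|ψ⟩⟨ψ| ⊗ ω_{S'}, ω_{QS'}) ≥ Fid²(|ψ⟩⟨ψ|, ω_Q) = ⟨ψ|ω_Q|ψ⟩`. -/
theorem fid_to_product_with_marginal
    {Q S' : Type} [Fintype Q] [DecidableEq Q] [Fintype S'] [DecidableEq S']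
    (ω : Matrix (Q × S') (Q × S') ℂ) (hω : IsState ω)
    (ψ : Q → ℂ) (hψ : star ψ ⬝ᵥ ψ = 1) :
    Fid (proj ψ) (ptraceRight ω) ^ 2 ≤ Fid (proj ψ ⊗ₖ ptraceLeft ω) ω ∧
    Fid (proj ψ) (ptraceRight ω) ^ 2 = (star ψ ⬝ᵥ (ptraceRight ω *ᵥ ψ)).re := by
  obtain ⟨hωpsd, -⟩ := hω
  have hρQ : (ptraceRight ω).PosSemidef := ptraceRight_posSemidef hωpsd
  have hρS : (ptraceLeft ω).PosSemidef := ptraceLeft_posSemidef hωpsd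
  have hP : (proj ψ).PosSemidef := proj_posSemidef ψ
  have hPP : proj ψ * proj ψ = proj ψ := by rw [proj_mul_proj, hψ, one_smul]
  -- the equality part
  have hconj : msqrt (ptraceRight ω) * proj ψ * msqrt (ptraceRight ω)
      = proj (msqrt (ptraceRight ω) *ᵥ ψ) := herm_conj_proj (msqrt_herm hρQ) ψ
  have hvv : star (msqrt (ptraceRight ω) *ᵥ ψ) ⬝ᵥ (msqrt (ptraceRight ω) *ᵥ ψ)
      = star ψ ⬝ᵥ (ptraceRight ω *ᵥ ψ) := by
    rw [Matrix.star_mulVec, ← Matrix.dotProduct_mulVec, Matrix.mulVec_mulVec,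
      msqrt_herm hρQ, msqrt_mul_self hρQ]
  have hfidP : Fid (proj ψ) (ptraceRight ω)
      = Real.sqrt ((star ψ ⬝ᵥ (ptraceRight ω *ᵥ ψ)).re) := by
    rw [fid_eq hP hρQ, hconj, trace_msqrt_proj, hvv]
  have hre_nonneg : 0 ≤ (star ψ ⬝ᵥ (ptraceRight ω *ᵥ ψ)).re :=
    (Complex.le_def.mp (hρQ.dotProduct_mulVec_nonneg ψ)).1
  have heq : Fid (proj ψ) (ptraceRight ω) ^ 2 = (star ψ ⬝ᵥ (ptraceRight ω *ᵥ ψ)).re := by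
    rw [hfidP, Real.sq_sqrt hre_nonneg]
  refine ⟨?_, heq⟩
  -- the inequality part
  have hWh : (msqrt ω)ᴴ = msqrt ω := msqrt_herm hωpsd
  have hkron : (proj ψ ⊗ₖ ptraceLeft ω).PosSemidef := psd_kron hP hρS
  have hkron1 : (proj ψ ⊗ₖ (1 : Matrix S' S' ℂ)).PosSemidef :=
    psd_kron hP Matrix.PosSemidef.one
  set W := msqrt ω with hW
  have hGpsd : (W * (proj ψ ⊗ₖ ptraceLeft ω) * W).PosSemidef := by
    have := hkron.conjTranspose_mul_mul_same W
    rwa [hWh] at this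
  have hKpsd : (W * (proj ψ ⊗ₖ (1 : Matrix S' S' ℂ)) * W).PosSemidef := by
    have := hkron1.conjTranspose_mul_mul_same W
    rwa [hWh] at this
  set K := W * (proj ψ ⊗ₖ (1 : Matrix S' S' ℂ)) * W with hK
  have hPτ := kron_proj_one_mul_mul ω ψ
  have hWW : W * W = ω := msqrt_mul_self hωpsd
  have hKK : K * K = W * (proj ψ ⊗ₖ ptau ω ψ) * W := by
    rw [hK]
    calc (W * (proj ψ ⊗ₖ (1 : Matrix S' S' ℂ)) * W) * (W * (proj ψ ⊗ₖ 1) * W)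
        = W * ((proj ψ ⊗ₖ (1 : Matrix S' S' ℂ)) * (W * W) * (proj ψ ⊗ₖ 1)) * W := by
          simp only [Matrix.mul_assoc]
      _ = W * (proj ψ ⊗ₖ ptau ω ψ) * W := by rw [hWW, hPτ]
  -- positive semidefiniteness of ptraceLeft ω - ptau ω ψ
  have hEherm : (((1 : Matrix Q Q ℂ) - proj ψ) ⊗ₖ (1 : Matrix S' S' ℂ))ᴴ
      = ((1 : Matrix Q Q ℂ) - proj ψ) ⊗ₖ (1 : Matrix S' S' ℂ) := by
    rw [kron_conjTranspose, conjTranspose_sub, conjTranspose_one, hP.1, conjTranspose_one]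
  have hconjpsd : ((((1 : Matrix Q Q ℂ) - proj ψ) ⊗ₖ (1 : Matrix S' S' ℂ)) * ω *
      (((1 : Matrix Q Q ℂ) - proj ψ) ⊗ₖ (1 : Matrix S' S' ℂ))).PosSemidef := by
    have := hωpsd.conjTranspose_mul_mul_same
      (((1 : Matrix Q Q ℂ) - proj ψ) ⊗ₖ (1 : Matrix S' S' ℂ))
    rwa [hEherm] at this
  have hkron_one : ((1 : Matrix Q Q ℂ) - proj ψ) ⊗ₖ (1 : Matrix S' S' ℂ)
      = 1 - proj ψ ⊗ₖ (1 : Matrix S' S' ℂ) := by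
    rw [sub_kron, Matrix.one_kronecker_one]
  have hexpand : (((1 : Matrix Q Q ℂ) - proj ψ) ⊗ₖ (1 : Matrix S' S' ℂ)) * ω *
      (((1 : Matrix Q Q ℂ) - proj ψ) ⊗ₖ (1 : Matrix S' S' ℂ))
      = ω - (proj ψ ⊗ₖ (1 : Matrix S' S' ℂ)) * ω - ω * (proj ψ ⊗ₖ (1 : Matrix S' S' ℂ))
        + (proj ψ ⊗ₖ (1 : Matrix S' S' ℂ)) * ω * (proj ψ ⊗ₖ (1 : Matrix S' S' ℂ)) := by
    rw [hkron_one]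
    noncomm_ring
  have hptl : ptraceLeft ((((1 : Matrix Q Q ℂ) - proj ψ) ⊗ₖ (1 : Matrix S' S' ℂ)) * ω *
      (((1 : Matrix Q Q ℂ) - proj ψ) ⊗ₖ (1 : Matrix S' S' ℂ))) = ptraceLeft ω - ptau ω ψ := by
    rw [hexpand, ptraceLeft_add, ptraceLeft_sub, ptraceLeft_sub, ptraceLeft_kron_mul,
      ptraceLeft_mul_kron, hPτ, ptraceLeft_kron, trace_proj, hψ, one_smul]
    abel
  have hρSτ : (ptraceLeft ω - ptau ω ψ).PosSemidef := by
    rw [← hptl]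
    exact ptraceLeft_posSemidef hconjpsd
  have hGKpsd : ((W * (proj ψ ⊗ₖ ptraceLeft ω) * W) - K * K).PosSemidef := by
    have hsub : (W * (proj ψ ⊗ₖ ptraceLeft ω) * W) - K * K
        = W * (proj ψ ⊗ₖ (ptraceLeft ω - ptau ω ψ)) * W := by
      rw [hKK, kron_sub, Matrix.mul_sub, Matrix.sub_mul]
    rw [hsub]
    have := (psd_kron hP hρSτ).conjTranspose_mul_mul_same W
    rwa [hWh] at this
  have hKKpsd : (K * K).PosSemidef := by
    have := posSemidef_conjTranspose_mul_self K
    rwa [hKpsd.1] at this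
  have hmono : (msqrt (K * K)).trace.re ≤ (msqrt (W * (proj ψ ⊗ₖ ptraceLeft ω) * W)).trace.re :=
    trace_re_msqrt_le hKKpsd hGpsd hGKpsd
  rw [msqrt_eq_of_sq hKKpsd hKpsd rfl] at hmono
  have hKtr : K.trace = star ψ ⬝ᵥ (ptraceRight ω *ᵥ ψ) := by
    rw [hK, trace_mul_cycle, hWW, trace_mul_kron_one]
  calc Fid (proj ψ) (ptraceRight ω) ^ 2
      = (star ψ ⬝ᵥ (ptraceRight ω *ᵥ ψ)).re := heq
    _ = K.trace.re := by rw [hKtr]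
    _ ≤ (msqrt (W * (proj ψ ⊗ₖ ptraceLeft ω) * W)).trace.re := hmono
    _ = Fid (proj ψ ⊗ₖ ptraceLeft ω) ω := (fid_eq hkron hωpsd).symm
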